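/- arXiv:2405.19541 — 2 statements merged into one kernel-verified Lean document; each statement's English description precedes it below -/
import Mathlib

section
/- For any non-decreasing Boolean function f : {0,1}^n → {0,1}, the expected size of its pivotal set under the Bernoulli(p) product measure satisfies E(|P(f)|) ≤ √(n·E(f)/(p(1−p))). -/
open Finset Real

/-- The Bernoulli(p) product weight of a configuration `ω ∈ {0,1}^n`. -/
def W (n : ℕ) (p : ℝ) (ω : Fin n → Bool) : ℝ :=
  ∏ i, if ω i then p else 1 - p

/-- Expectation of `g` under the Bernoulli(p) product measure on `{0,1}^n`. -/
def Ex (n : ℕ) (p : ℝ) (g : (Fin n → Bool) → ℝ) : ℝ :=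
  ∑ ω : Fin n → Bool, g ω * W n p ω

/-- `ω` with its `i`-th coordinate set to `1`. -/
def up1 {n : ℕ} (ω : Fin n → Bool) (i : Fin n) : Fin n → Bool :=
  Function.update ω i true

/-- `ω` with its `i`-th coordinate set to `0`. -/
def up0 {n : ℕ} (ω : Fin n → Bool) (i : Fin n) : Fin n → Bool :=
  Function.update ω i false

/-- The random variable `X i (ω) = ω(i)/p − (1−ω(i))/(1−p)`. -/
noncomputable def X (n : ℕ) (p : ℝ) (i : Fin n) (ω : Fin n → Bool) : ℝ :=
  (if ω i then (1:ℝ) else 0) / p - (1 - if ω i then (1:ℝ) else 0) / (1 - p)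

/-- `S_n = X_1 + ⋯ + X_n`. -/
noncomputable def Sn (n : ℕ) (p : ℝ) (ω : Fin n → Bool) : ℝ :=
  ∑ i, X n p i ω

/-- The set of pivotal coordinates of `f` at `ω`. -/
def pivSet {n : ℕ} (f : (Fin n → Bool) → Bool) (ω : Fin n → Bool) : Finset (Fin n) :=
  Finset.univ.filter fun i => f (up1 ω i) ≠ f (up0 ω i)

/-- The real value of a Boolean function. -/
def fval {n : ℕ} (f : (Fin n → Bool) → Bool) (ω : Fin n → Bool) : ℝ :=
  if f ω then 1 else 0

/-- Probability of an event under the Bernoulli(p) product measure. -/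
def Pr (n : ℕ) (p : ℝ) (A : (Fin n → Bool) → Prop) [DecidablePred A] : ℝ :=
  ∑ ω ∈ Finset.univ.filter A, W n p ω

/-- `f` is non-decreasing. -/
def Mono {n : ℕ} (f : (Fin n → Bool) → Bool) : Prop :=
  ∀ (ω : Fin n → Bool) (i : Fin n), f (up0 ω i) ≤ f (up1 ω i)

/-!
With `X i` the centred, normalised `i`-th coordinate, averaging over the `i`-th coordinate shows
that for monotone `f` the probability that `i` is pivotal equals `E[f X i]`; summing over `i`,
`E|P(f)| = E[f Sₙ]`. The `X i` are orthogonal with `E[X i ^ 2] = 1 / (p (1 - p))`, so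
`E[Sₙ ^ 2] = n / (p (1 - p))`, and Cauchy–Schwarz together with `f ^ 2 = f` gives the bound.
-/

section Expectation

variable {n : ℕ} {p : ℝ}

lemma W_nonneg (hp0 : 0 ≤ p) (hp1 : p ≤ 1) (ω : Fin n → Bool) : 0 ≤ W n p ω :=
  prod_nonneg fun i _ => by split <;> linarith

lemma Ex_sum {ι : Type*} (s : Finset ι) (g : ι → (Fin n → Bool) → ℝ) :
    Ex n p (fun ω => ∑ i ∈ s, g i ω) = ∑ i ∈ s, Ex n p (g i) := by
  simp only [Ex, sum_mul]
  exact sum_comm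

lemma Ex_sub (g h : (Fin n → Bool) → ℝ) :
    Ex n p (fun ω => g ω - h ω) = Ex n p g - Ex n p h := by
  simp only [Ex, sub_mul, sum_sub_distrib]

lemma sum_W : ∑ ω, W n p ω = 1 := by
  simp only [W]
  rw [← Fintype.prod_sum fun (_ : Fin n) (b : Bool) => if b then p else 1 - p]
  simp

lemma Ex_const (c : ℝ) : Ex n p (fun _ => c) = c := by
  rw [Ex, ← mul_sum, sum_W, mul_one]

lemma Ex_mul_sq_le (hp0 : 0 ≤ p) (hp1 : p ≤ 1) (g h : (Fin n → Bool) → ℝ) :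
    Ex n p (fun ω => g ω * h ω) ^ 2 ≤ Ex n p (fun ω => g ω ^ 2) * Ex n p (fun ω => h ω ^ 2) :=
  sum_sq_le_sum_mul_sum_of_sq_le_mul _
    (fun ω _ => mul_nonneg (sq_nonneg _) (W_nonneg hp0 hp1 ω))
    (fun ω _ => mul_nonneg (sq_nonneg _) (W_nonneg hp0 hp1 ω))
    fun ω _ => (by ring : _ = _).le

end Expectation

section CoordinateAverage

variable {n : ℕ} {p : ℝ}

def flipAt (ω : Fin n → Bool) (i : Fin n) : Fin n → Bool :=
  Function.update ω i (!ω i)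

lemma flipAt_involutive (i : Fin n) : Function.Involutive (flipAt · i) := fun ω => by
  simp [flipAt]

lemma add_apply_flipAt (g : (Fin n → Bool) → ℝ) (ω : Fin n → Bool) (i : Fin n) :
    g ω + g (flipAt ω i) = g (up1 ω i) + g (up0 ω i) := by
  cases h : ω i
  · have h0 : up0 ω i = ω := by rw [up0, ← h, Function.update_eq_self]
    have h1 : flipAt ω i = up1 ω i := by rw [flipAt, up1, h, Bool.not_false]
    rw [h0, h1, add_comm]
  · have h1 : up1 ω i = ω := by rw [up1, ← h, Function.update_eq_self]
    have h0 : flipAt ω i = up0 ω i := by rw [flipAt, up0, h, Bool.not_true]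
    rw [h0, h1]

lemma W_update (ω : Fin n → Bool) (i : Fin n) (b : Bool) :
    W n p (Function.update ω i b) =
      (if b then p else 1 - p) * ∏ j ∈ univ.erase i, if ω j then p else 1 - p := by
  rw [W, ← mul_prod_erase univ _ (mem_univ i), Function.update_self]
  congr 1
  exact prod_congr rfl fun j hj => by rw [Function.update_of_ne (ne_of_mem_erase hj)]

lemma Ex_eq_zero_of_forall_coord_average (i : Fin n) (g : (Fin n → Bool) → ℝ)
    (hg : ∀ ω, p * g (up1 ω i) + (1 - p) * g (up0 ω i) = 0) : Ex n p g = 0 := by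
  have hpair : 2 * Ex n p g =
      ∑ ω, (g (up1 ω i) * W n p (up1 ω i) + g (up0 ω i) * W n p (up0 ω i)) := by
    have hflip : ∑ ω, g (flipAt ω i) * W n p (flipAt ω i) = Ex n p g :=
      Equiv.sum_comp ((flipAt_involutive i).toPerm _) fun ω => g ω * W n p ω
    rw [two_mul]
    nth_rw 2 [← hflip]
    rw [Ex, ← sum_add_distrib]
    exact sum_congr rfl fun ω _ => add_apply_flipAt (fun ω => g ω * W n p ω) ω i
  have hterm : ∀ ω, g (up1 ω i) * W n p (up1 ω i) + g (up0 ω i) * W n p (up0 ω i) = 0 := by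
    intro ω
    have h := hg ω
    simp only [up1, up0] at h ⊢
    simp only [W_update, if_true, Bool.false_eq_true, if_false]
    linear_combination (∏ j ∈ univ.erase i, if ω j then p else 1 - p) * h
  simp only [hterm, sum_const_zero] at hpair
  linarith

end CoordinateAverage

section SecondMoment

variable {n : ℕ} {p : ℝ}

lemma X_up1 (i : Fin n) (ω : Fin n → Bool) : X n p i (up1 ω i) = 1 / p := by
  simp [X, up1]

lemma X_up0 (i : Fin n) (ω : Fin n → Bool) : X n p i (up0 ω i) = -(1 / (1 - p)) := by
  simp [X, up0]

lemma X_update_of_ne {i j : Fin n} (hij : j ≠ i) (ω : Fin n → Bool) (b : Bool) :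
    X n p j (Function.update ω i b) = X n p j ω := by
  simp [X, Function.update_of_ne hij]

lemma Ex_X_mul_X (hp0 : p ≠ 0) (hp1 : 1 - p ≠ 0) (i j : Fin n) :
    Ex n p (fun ω => X n p i ω * X n p j ω) = if i = j then 1 / (p * (1 - p)) else 0 := by
  split_ifs with hij
  · subst hij
    have h : Ex n p (fun ω => X n p i ω * X n p i ω - 1 / (p * (1 - p))) = 0 :=
      Ex_eq_zero_of_forall_coord_average i _ fun ω => by
        simp only [X_up1, X_up0]
        field_simp
        ring
    rwa [Ex_sub, Ex_const, sub_eq_zero] at h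
  · refine Ex_eq_zero_of_forall_coord_average i _ fun ω => ?_
    rw [X_up1, X_up0, up1, up0, X_update_of_ne (Ne.symm hij), X_update_of_ne (Ne.symm hij)]
    field_simp
    ring

lemma Ex_Sn_sq (hp0 : p ≠ 0) (hp1 : 1 - p ≠ 0) :
    Ex n p (fun ω => Sn n p ω ^ 2) = n / (p * (1 - p)) := by
  simp only [Sn, sq, sum_mul_sum, Ex_sum, Ex_X_mul_X hp0 hp1, sum_ite_eq, if_pos (mem_univ _),
    sum_const, card_univ, Fintype.card_fin, nsmul_eq_mul, mul_one_div]

end SecondMoment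

section Pivotal

variable {n : ℕ} {p : ℝ} {f : (Fin n → Bool) → Bool}

lemma mem_pivSet_update {i : Fin n} {ω : Fin n → Bool} {b : Bool} :
    i ∈ pivSet f (Function.update ω i b) ↔ i ∈ pivSet f ω := by
  unfold pivSet
  rw [mem_filter, mem_filter]
  simp only [up1, up0, Function.update_idem]

lemma card_pivSet (ω : Fin n → Bool) :
    ((pivSet f ω).card : ℝ) = ∑ i, if i ∈ pivSet f ω then 1 else 0 := by
  rw [sum_boole, filter_mem_eq_inter, univ_inter]

lemma fval_up1_sub_fval_up0 (hf : Mono f) (ω : Fin n → Bool) (i : Fin n) :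
    fval f (up1 ω i) - fval f (up0 ω i) = if i ∈ pivSet f ω then 1 else 0 := by
  have hmono := hf ω i
  simp only [fval, pivSet, mem_filter, mem_univ, true_and]
  revert hmono
  cases f (up1 ω i) <;> cases f (up0 ω i) <;> simp

lemma Ex_fval_mul_X (hp0 : p ≠ 0) (hp1 : 1 - p ≠ 0) (hf : Mono f) (i : Fin n) :
    Ex n p (fun ω => fval f ω * X n p i ω) = Ex n p (fun ω => if i ∈ pivSet f ω then 1 else 0) := by
  have h : Ex n p (fun ω => fval f ω * X n p i ω - if i ∈ pivSet f ω then 1 else 0) = 0 := by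
    refine Ex_eq_zero_of_forall_coord_average i _ fun ω => ?_
    rw [X_up1, X_up0]
    simp only [up1, up0, mem_pivSet_update]
    rw [← up1, ← up0, ← fval_up1_sub_fval_up0 hf]
    field_simp
    ring
  rwa [Ex_sub, sub_eq_zero] at h

lemma Ex_card_pivSet (hp0 : p ≠ 0) (hp1 : 1 - p ≠ 0) (hf : Mono f) :
    Ex n p (fun ω => ((pivSet f ω).card : ℝ)) = Ex n p (fun ω => fval f ω * Sn n p ω) := by
  simp only [card_pivSet, Sn, mul_sum, Ex_sum, Ex_fval_mul_X hp0 hp1 hf]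

end Pivotal

theorem stmt4 (n : ℕ) (p : ℝ) (hp0 : 0 < p) (hp1 : p < 1)
    (f : (Fin n → Bool) → Bool) (hf : Mono f) :
    Ex n p (fun ω => ((pivSet f ω).card : ℝ)) ≤
      Real.sqrt (n * Ex n p (fval f) / (p * (1 - p))) := by
  have hq : 0 < 1 - p := sub_pos.2 hp1
  have hfval_sq : (fun ω => fval f ω ^ 2) = fval f := funext fun ω => by
    unfold fval; split <;> norm_num
  rw [Ex_card_pivSet hp0.ne' hq.ne' hf]
  refine Real.le_sqrt_of_sq_le ?_
  calc Ex n p (fun ω => fval f ω * Sn n p ω) ^ 2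
      ≤ Ex n p (fun ω => fval f ω ^ 2) * Ex n p (fun ω => Sn n p ω ^ 2) :=
        Ex_mul_sq_le hp0.le hp1.le _ _
    _ = n * Ex n p (fval f) / (p * (1 - p)) := by
        rw [hfval_sq, Ex_Sn_sq hp0.ne' hq.ne']
        ring
end

section
/- For any Boolean function f : {0,1}^n → {0,1}, P(f = 1) ≤ 2·exp(−(1/2)·Σ_{i=1}^n (p(1−p)·E(X_i | f=1))²), where X_i(ω) = ω(i)/p − (1−ω(i))/(1−p). -/
/-!
Write `t = P(f = 1)` and let `q i` be the probability that `ω i = 1` given `f = 1`. Since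
`p (1 - p) X i = ω i - p`, the `i`-th term of the exponent is `(q i - p)²`. Gibbs' inequality,
comparing the law of `ω` given `f = 1` with the product of its marginals, gives
`∑ i, KL(Ber(q i) ‖ Ber p) ≤ KL(P(· | f = 1) ‖ P) = -log t`, and each binary divergence dominates
`(q i - p)²` through the Hellinger distance. Hence `t ≤ exp (-∑ i, (q i - p)²)`.
-/

open Finset Real

/-- `W n p` is `prodWeight fun _ => p`, definitionally. -/
def prodWeight {ι : Type*} [Fintype ι] (q : ι → ℝ) (ω : ι → Bool) : ℝ :=
  ∏ i, if ω i then q i else 1 - q i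

section ProductWeight

variable {ι : Type*} [Fintype ι]

theorem sum_prodWeight [DecidableEq ι] (q : ι → ℝ) : ∑ ω, prodWeight q ω = 1 := by
  calc ∑ ω, prodWeight q ω = ∏ i, ∑ b : Bool, if b then q i else 1 - q i :=
        (Fintype.prod_sum fun i (b : Bool) => if b then q i else 1 - q i).symm
    _ = 1 := by simp

theorem prodWeight_nonneg {q : ι → ℝ} (hq0 : ∀ i, 0 ≤ q i) (hq1 : ∀ i, q i ≤ 1) (ω : ι → Bool) :
    0 ≤ prodWeight q ω :=
  prod_nonneg fun i _ => by split <;> linarith [hq0 i, hq1 i]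

theorem prodWeight_pos {q : ι → ℝ} (hq0 : ∀ i, 0 < q i) (hq1 : ∀ i, q i < 1) (ω : ι → Bool) :
    0 < prodWeight q ω :=
  prod_pos fun i _ => by split <;> linarith [hq0 i, hq1 i]

end ProductWeight

noncomputable def klBin (q p : ℝ) : ℝ :=
  q * log (q / p) + (1 - q) * log ((1 - q) / (1 - p))

theorem two_mul_sq_sub_mul_le_sq_mul_log {x y : ℝ} (hx : 0 ≤ x) (hy : 0 < y) :
    2 * (x ^ 2 - x * y) ≤ x ^ 2 * log (x ^ 2 / y ^ 2) := by
  rcases hx.eq_or_lt with rfl | hx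
  · simp
  have hlog := one_sub_inv_le_log_of_pos (div_pos hx hy)
  rw [inv_div] at hlog
  have hmul : x ^ 2 * (1 - y / x) = x ^ 2 - x * y := by field_simp
  rw [← div_pow, log_pow]
  nlinarith [sq_nonneg x]

/-- A weak form of Pinsker's inequality, obtained by bounding the divergence below by the squared
Hellinger distance `(√q - √p)² + (√(1-q) - √(1-p))²`. -/
theorem sq_sub_le_klBin {p q : ℝ} (hp0 : 0 < p) (hp1 : p < 1) (hq0 : 0 ≤ q) (hq1 : q ≤ 1) :
    (q - p) ^ 2 ≤ klBin q p := by
  obtain ⟨a, ha, rfl⟩ : ∃ a, 0 ≤ a ∧ a ^ 2 = q := ⟨√q, sqrt_nonneg q, sq_sqrt hq0⟩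
  obtain ⟨b, hb, rfl⟩ : ∃ b, 0 < b ∧ b ^ 2 = p := ⟨√p, sqrt_pos.2 hp0, sq_sqrt hp0.le⟩
  obtain ⟨c, hc, hca⟩ : ∃ c, 0 ≤ c ∧ c ^ 2 = 1 - a ^ 2 :=
    ⟨√(1 - a ^ 2), sqrt_nonneg _, sq_sqrt (by linarith)⟩
  obtain ⟨d, hd, hdb⟩ : ∃ d, 0 < d ∧ d ^ 2 = 1 - b ^ 2 :=
    ⟨√(1 - b ^ 2), sqrt_pos.2 (by linarith), sq_sqrt (by linarith)⟩
  have h₁ := two_mul_sq_sub_mul_le_sq_mul_log ha hb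
  have h₂ := two_mul_sq_sub_mul_le_sq_mul_log hc hd
  rw [hca, hdb] at h₂
  have hellinger : (a ^ 2 - b ^ 2) ^ 2 ≤ (a - b) ^ 2 + (c - d) ^ 2 := by
    nlinarith [sq_nonneg (a * d - b * c), sq_nonneg (a * c - b * d),
      sq_nonneg (a - b - (d - c)), sq_nonneg (a - b + c - d)]
  unfold klBin
  nlinarith

section Conditioning

variable {ι : Type*} [Fintype ι] (r : ι → ℝ) (A : Finset (ι → Bool))

noncomputable def condWeight (ω : ι → Bool) : ℝ :=
  prodWeight r ω / ∑ ω ∈ A, prodWeight r ω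

noncomputable def condMarginal (i : ι) : ℝ :=
  ∑ ω ∈ A with ω i, condWeight r A ω

variable {r A}

theorem sum_condWeight (hr0 : ∀ i, 0 < r i) (hr1 : ∀ i, r i < 1) (hA : A.Nonempty) :
    ∑ ω ∈ A, condWeight r A ω = 1 := by
  simp only [condWeight, ← sum_div]
  exact div_self (sum_pos (fun ω _ => prodWeight_pos hr0 hr1 ω) hA).ne'

theorem condWeight_pos (hr0 : ∀ i, 0 < r i) (hr1 : ∀ i, r i < 1) (hA : A.Nonempty)
    (ω : ι → Bool) : 0 < condWeight r A ω :=
  div_pos (prodWeight_pos hr0 hr1 ω) (sum_pos (fun ω _ => prodWeight_pos hr0 hr1 ω) hA)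

theorem one_sub_condMarginal (hr0 : ∀ i, 0 < r i) (hr1 : ∀ i, r i < 1) (hA : A.Nonempty)
    (i : ι) : 1 - condMarginal r A i = ∑ ω ∈ A with ¬ω i, condWeight r A ω := by
  rw [← sum_condWeight hr0 hr1 hA, ← sum_filter_add_sum_filter_not A (fun ω => ω i),
    condMarginal, add_sub_cancel_left]

theorem sum_condWeight_mul_ite (hr0 : ∀ i, 0 < r i) (hr1 : ∀ i, r i < 1) (hA : A.Nonempty)
    (i : ι) (x y : ℝ) :
    ∑ ω ∈ A, condWeight r A ω * (if ω i then x else y) =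
      condMarginal r A i * x + (1 - condMarginal r A i) * y := by
  rw [one_sub_condMarginal hr0 hr1 hA, condMarginal]
  simp only [mul_ite, sum_ite, ← sum_mul]

theorem condMarginal_mem_Icc (hr0 : ∀ i, 0 < r i) (hr1 : ∀ i, r i < 1) (hA : A.Nonempty)
    (i : ι) : condMarginal r A i ∈ Set.Icc 0 1 := by
  have hnonneg (P : (ι → Bool) → Prop) [DecidablePred P] :
      0 ≤ ∑ ω ∈ A with P ω, condWeight r A ω :=
    sum_nonneg fun ω _ => (condWeight_pos hr0 hr1 hA ω).le
  have hcompl := one_sub_condMarginal hr0 hr1 hA i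
  exact ⟨hnonneg _, by linarith [hnonneg fun ω => ¬ω i]⟩

theorem prodWeight_condMarginal_pos (hr0 : ∀ i, 0 < r i) (hr1 : ∀ i, r i < 1) (hA : A.Nonempty)
    {ω : ι → Bool} (hω : ω ∈ A) : 0 < prodWeight (condMarginal r A) ω := by
  refine prod_pos fun i _ => ?_
  have hle (P : (ι → Bool) → Prop) [DecidablePred P] (hP : P ω) :
      condWeight r A ω ≤ ∑ ω ∈ A with P ω, condWeight r A ω :=
    single_le_sum (fun ω _ => (condWeight_pos hr0 hr1 hA ω).le) (mem_filter.2 ⟨hω, hP⟩)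
  have hpos := condWeight_pos hr0 hr1 hA ω
  split_ifs with hi
  · exact hpos.trans_le (hle _ hi)
  · rw [one_sub_condMarginal hr0 hr1 hA]
    exact hpos.trans_le (hle (fun ω => ¬ω i) hi)

/-- Jensen's inequality for `log` under `condWeight r A`, applied to the likelihood ratio of the
product of the conditional marginals against `prodWeight r`: its mean logarithm is the sum of the
marginal divergences, and its mean is at most `1 / P(A)`. -/
theorem sum_klBin_condMarginal_le_neg_log [DecidableEq ι] (hr0 : ∀ i, 0 < r i)
    (hr1 : ∀ i, r i < 1) (hA : A.Nonempty) :
    ∑ i, klBin (condMarginal r A i) (r i) ≤ -log (∑ ω ∈ A, prodWeight r ω) := by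
  set q := condMarginal r A
  set t := ∑ ω ∈ A, prodWeight r ω
  set ratio : (ι → Bool) → ℝ := fun ω => prodWeight q ω / prodWeight r ω
  have hratio_pos : ∀ ω ∈ A, 0 < ratio ω := fun ω hω =>
    div_pos (prodWeight_condMarginal_pos hr0 hr1 hA hω) (prodWeight_pos hr0 hr1 ω)
  have hlog_ratio : ∀ ω ∈ A, log (ratio ω) =
      ∑ i, if ω i then log (q i / r i) else log ((1 - q i) / (1 - r i)) := by
    intro ω hω
    have hfactor (i : ι) : ((if ω i then q i else 1 - q i) / if ω i then r i else 1 - r i) ≠ 0 :=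
      div_ne_zero (prod_ne_zero_iff.1 (prodWeight_condMarginal_pos hr0 hr1 hA hω).ne' i
        (mem_univ i)) (prod_ne_zero_iff.1 (prodWeight_pos hr0 hr1 ω).ne' i (mem_univ i))
    rw [show ratio ω = _ from (prod_div_distrib ..).symm, log_prod fun i _ => hfactor i]
    exact sum_congr rfl fun i _ => by split_ifs <;> rfl
  have hmean : ∑ i, klBin (q i) (r i) = ∑ ω ∈ A, condWeight r A ω * log (ratio ω) := by
    rw [sum_congr rfl fun ω hω => congrArg _ (hlog_ratio ω hω)]
    simp only [mul_sum]
    rw [sum_comm]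
    exact sum_congr rfl fun i _ => (sum_condWeight_mul_ite hr0 hr1 hA i _ _).symm
  have hjensen : ∑ ω ∈ A, condWeight r A ω * log (ratio ω) ≤
      log (∑ ω ∈ A, condWeight r A ω * ratio ω) :=
    strictConcaveOn_log_Ioi.concaveOn.le_map_sum (fun ω _ => (condWeight_pos hr0 hr1 hA ω).le)
      (sum_condWeight hr0 hr1 hA) hratio_pos
  have hmass : ∑ ω ∈ A, condWeight r A ω * ratio ω ≤ t⁻¹ := by
    have hq := condMarginal_mem_Icc hr0 hr1 hA
    have hsub : ∑ ω ∈ A, prodWeight q ω ≤ 1 :=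
      sum_prodWeight q ▸ sum_le_sum_of_subset_of_nonneg (subset_univ A)
        fun ω _ _ => prodWeight_nonneg (fun i => (hq i).1) (fun i => (hq i).2) ω
    calc ∑ ω ∈ A, condWeight r A ω * ratio ω = (∑ ω ∈ A, prodWeight q ω) * t⁻¹ := by
          rw [sum_mul]
          refine sum_congr rfl fun ω _ => ?_
          rw [condWeight, show ratio ω = prodWeight q ω / prodWeight r ω from rfl,
            div_mul_div_cancel₀' (prodWeight_pos hr0 hr1 ω).ne', div_eq_mul_inv]
      _ ≤ t⁻¹ := mul_le_of_le_one_left (inv_nonneg.2 (sum_nonneg fun ω _ =>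
          (prodWeight_pos hr0 hr1 ω).le)) hsub
  calc ∑ i, klBin (q i) (r i) ≤ log (∑ ω ∈ A, condWeight r A ω * ratio ω) := hmean ▸ hjensen
    _ ≤ log t⁻¹ := log_le_log (sum_pos (fun ω hω =>
        mul_pos (condWeight_pos hr0 hr1 hA ω) (hratio_pos ω hω)) hA) hmass
    _ = -log t := log_inv t

end Conditioning

section BernoulliCube

variable {n : ℕ} {p : ℝ}

theorem mul_X_eq (hp0 : p ≠ 0) (hp1 : p ≠ 1) (i : Fin n) (ω : Fin n → Bool) :
    p * (1 - p) * X n p i ω = if ω i then 1 - p else -p := by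
  have : 1 - p ≠ 0 := sub_ne_zero.2 hp1.symm
  unfold X
  split <;> field_simp <;> ring

theorem Ex_mul_fval (g : (Fin n → Bool) → ℝ) (f : (Fin n → Bool) → Bool) :
    Ex n p (fun ω => g ω * fval f ω) = ∑ ω ∈ univ.filter fun ω => f ω = true, g ω * W n p ω := by
  rw [Ex, sum_filter]
  refine sum_congr rfl fun ω _ => ?_
  unfold fval
  split <;> simp

theorem mul_Ex_X_mul_fval_div_Pr (hp0 : 0 < p) (hp1 : p < 1) (f : (Fin n → Bool) → Bool)
    (hpos : 0 < Pr n p (fun ω => f ω = true)) (i : Fin n) :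
    p * (1 - p) * (Ex n p (fun ω => X n p i ω * fval f ω) / Pr n p (fun ω => f ω = true)) =
      condMarginal (fun _ => p) (univ.filter fun ω => f ω = true) i - p := by
  have hA : (univ.filter fun ω => f ω = true).Nonempty := nonempty_of_sum_ne_zero hpos.ne'
  rw [Ex_mul_fval, sum_div, mul_sum]
  calc _ = ∑ ω ∈ univ.filter fun ω => f ω = true,
        condWeight (fun _ => p) (univ.filter fun ω => f ω = true) ω *
          (if ω i then 1 - p else -p) := by
        refine sum_congr rfl fun ω _ => ?_
        rw [← mul_X_eq hp0.ne' hp1.ne]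
        change _ = W n p ω / Pr n p (fun ω => f ω = true) * _
        ring
    _ = _ := by
        rw [sum_condWeight_mul_ite (fun _ => hp0) (fun _ => hp1) hA]
        ring

end BernoulliCube

theorem stmt18 (n : ℕ) (p : ℝ) (hp0 : 0 < p) (hp1 : p < 1)
    (f : (Fin n → Bool) → Bool)
    (hpos : 0 < Pr n p (fun ω => f ω = true)) :
    Pr n p (fun ω => f ω = true) ≤
      2 * Real.exp (-(1 / 2) *
        ∑ i : Fin n,
          (p * (1 - p) *
            (Ex n p (fun ω => X n p i ω * fval f ω) /
              Pr n p (fun ω => f ω = true))) ^ 2) := by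
  set A := univ.filter fun ω => f ω = true
  set q := condMarginal (fun _ : Fin n => p) A
  have hA : A.Nonempty := nonempty_of_sum_ne_zero hpos.ne'
  have hq (i : Fin n) := condMarginal_mem_Icc (fun _ => hp0) (fun _ => hp1) hA i
  have hS : ∑ i, (q i - p) ^ 2 ≤ -log (Pr n p (fun ω => f ω = true)) :=
    (sum_le_sum fun i _ => sq_sub_le_klBin hp0 hp1 (hq i).1 (hq i).2).trans
      (sum_klBin_condMarginal_le_neg_log (fun _ => hp0) (fun _ => hp1) hA)
  have hS0 : 0 ≤ ∑ i, (q i - p) ^ 2 := sum_nonneg fun i _ => sq_nonneg _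
  simp only [mul_Ex_X_mul_fval_div_Pr hp0 hp1 f hpos]
  calc Pr n p (fun ω => f ω = true) = exp (log (Pr n p (fun ω => f ω = true))) :=
        (exp_log hpos).symm
    _ ≤ exp (-(1 / 2) * ∑ i, (q i - p) ^ 2) := exp_le_exp.2 (by linarith)
    _ ≤ 2 * exp (-(1 / 2) * ∑ i, (q i - p) ^ 2) := le_mul_of_one_le_left (exp_pos _).le one_le_two
end
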